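/- If c ≤ k are fixed and s(n) = ω(n^{1/c²}), then the probability that C_n^k is colourable from random c-lists tends to 1 as n → ∞. -/

import Mathlib

open Filter Finset

/-- Cyclic distance between residues `i, j` (given as naturals `< n`) on an `n`-cycle. -/
def cycleDist (n i j : ℕ) : ℕ := min ((i + n - j) % n) ((j + n - i) % n)

/-- `C_n^k`: the `k`-th power of the cycle on `n` vertices. -/
def cyclePower (n k : ℕ) : SimpleGraph (Fin n) where
  Adj i j := i ≠ j ∧ cycleDist n i.val j.val ≤ k
  symm := by
    constructor
    intro i j h
    refine ⟨h.1.symm, ?_⟩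
    have h2 := h.2
    unfold cycleDist at h2 ⊢
    omega
  loopless := by constructor; intro i h; exact h.1 rfl

instance cyclePowerDecidable (n k : ℕ) : DecidableRel (cyclePower n k).Adj :=
  fun i j => inferInstanceAs (Decidable (i ≠ j ∧ cycleDist n i.val j.val ≤ k))

/-- The vertex `i` steps after `a` along the cycle. -/
def rot {n : ℕ} (a : Fin n) (i : ℕ) : Fin n := a + ⟨i % n, Nat.mod_lt i a.pos⟩

/-- All assignments of `c`-element lists (from a colour set of size `s`) to vertices. -/
def allLists (V : Type) [Fintype V] [DecidableEq V] (s c : ℕ) :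
    Finset (V → Finset (Fin s)) :=
  Finset.univ.filter fun L => ∀ v, (L v).card = c

open scoped Classical in
/-- Probability of an event `P` under uniform i.i.d. random `c`-lists. -/
noncomputable def probEvent (V : Type) [Fintype V] [DecidableEq V] (s c : ℕ)
    (P : (V → Finset (Fin s)) → Prop) : ℝ :=
  (((allLists V s c).filter P).card : ℝ) / ((allLists V s c).card : ℝ)

/-- `G` admits a proper colouring from the lists `L`. -/
def colourable {V : Type} {s : ℕ} (G : SimpleGraph V) (L : V → Finset (Fin s)) : Prop :=
  ∃ f : V → Fin s, (∀ v, f v ∈ L v) ∧ ∀ ⦃v w⦄, G.Adj v w → f v ≠ f w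

open Asymptotics

/-- Number of (c+1)-cliques of `C_n^k` all of whose vertices got the same list. -/
def numCliquesSame (n k s c : ℕ) (L : Fin n → Finset (Fin s)) : ℕ :=
  (((cyclePower n k).cliqueFinset (c+1)).filter
    (fun S => ∀ v ∈ S, ∀ w ∈ S, L v = L w)).card

/-- Expected number of (c+1)-cliques of `C_n^k` with all lists equal. -/
noncomputable def expCliquesSame (n k s c : ℕ) : ℝ :=
  (∑ L ∈ allLists (Fin n) s c, (numCliquesSame n k s c L : ℝ)) /
    ((allLists (Fin n) s c).card : ℝ)



/-! ### Auxiliary development -/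

namespace CPAux

open Finset

open scoped Classical

/-- The list at integer position `i` (empty if out of range). -/
def listAt {n s : ℕ} (L : Fin n → Finset (Fin s)) (i : ℕ) : Finset (Fin s) :=
  if h : i < n then L ⟨i, h⟩ else ∅

/-- Positions near `v` (within cyclic distance roughly `2k`), excluding `v`. -/
def Near (n k v : ℕ) : Finset ℕ :=
  ((Finset.range (v + 2*k + 1)) ∪ Finset.Ico (n + v - 2*k) n).erase v

/-- Bad event for a starting-window vertex `v`. -/
def winBad (n k v : ℕ) {s : ℕ} (L : Fin n → Finset (Fin s)) : Prop :=
  ∀ x ∈ listAt L v, ∃ w ∈ Near n k v, x ∈ listAt L w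

/-- Bad event at position `M` with blockers `u`. -/
def cliqueBad (n k M : ℕ) {c s : ℕ} (u : Fin c → ℕ) (L : Fin n → Finset (Fin s)) : Prop :=
  Function.Injective u ∧ (∀ j, M - k ≤ u j ∧ u j < M) ∧
  ∀ j, ∃ x ∈ listAt L (u j), x ∈ listAt L M ∧ ∀ y ∈ listAt L (u j), y ≠ x →
    (y ∈ listAt L M ∨ ∃ w, M - 2*k ≤ w ∧ w < M ∧ (∀ i, w ≠ u i) ∧ y ∈ listAt L w)

/-- Good list assignments. -/
def GoodL (n k c : ℕ) {s : ℕ} (L : Fin n → Finset (Fin s)) : Prop :=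
  (∀ v < 2*k, ¬ winBad n k v L) ∧
  (∀ M, 2*k ≤ M → M < n → ∀ u : Fin c → ℕ, ¬ cliqueBad n k M u L)

lemma listAt_card {n s c : ℕ} {L : Fin n → Finset (Fin s)}
    (hL : L ∈ allLists (Fin n) s c) {i : ℕ} (hi : i < n) :
    (listAt L i).card = c := by
  simp only [allLists, mem_filter] at hL
  simp [listAt, hi, hL.2]

lemma listAt_card_le {n s c : ℕ} {L : Fin n → Finset (Fin s)}
    (hL : L ∈ allLists (Fin n) s c) (i : ℕ) :
    (listAt L i).card ≤ c := by
  by_cases hi : i < n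
  · exact (listAt_card hL hi).le
  · simp [listAt, hi]

/-- Deterministic lemma: good list systems are colourable. -/
lemma good_colourable {n k c s : ℕ} (hc : 1 ≤ c) (hck : c ≤ k) (hn : 4*k + 4 ≤ n)
    {L : Fin n → Finset (Fin s)} (hL : L ∈ allLists (Fin n) s c)
    (hG : GoodL n k c L) : colourable (cyclePower n k) L := by
  classical
  have hk1 : 1 ≤ k := le_trans hc hck
  have hcs : c ≤ s := by
    have h1 := listAt_card hL (show 0 < n by omega)
    have h2 : (listAt L 0).card ≤ (univ : Finset (Fin s)).card :=
      Finset.card_le_card (Finset.subset_univ _)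
    simp only [Finset.card_univ, Fintype.card_fin] at h2
    omega
  have hs0 : 0 < s := lt_of_lt_of_le hc hcs
  -- the three-part invariant
  have main : ∀ M, 2*k ≤ M → M ≤ n → ∃ f : ℕ → Fin s,
      (∀ i, i < M → f i ∈ listAt L i) ∧
      (∀ i j, i < j → j < M → j - i ≤ k → f i ≠ f j) ∧
      (∀ i, i < 2*k → ∀ w ∈ Near n k i, f i ∉ listAt L w) := by
    intro M hM
    induction M, hM using Nat.le_induction with
    | base =>
      intro _
      have hwin : ∀ v, v < 2*k → ∃ x ∈ listAt L v, ∀ w ∈ Near n k v, x ∉ listAt L w := by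
        intro v hv
        have h := hG.1 v hv
        rw [winBad] at h
        push_neg at h
        exact h
      choose xw hxw1 hxw2 using hwin
      refine ⟨fun i => if h : i < 2*k then xw i h else ⟨0, hs0⟩, ?_, ?_, ?_⟩
      · intro i hi
        dsimp only
        rw [dif_pos hi]
        exact hxw1 i hi
      · intro i j hij hj hk'
        have hi : i < 2*k := lt_trans hij hj
        dsimp only
        rw [dif_pos hi, dif_pos hj]
        intro heq
        have hiNear : i ∈ Near n k j := by
          rw [Near, Finset.mem_erase, Finset.mem_union, Finset.mem_range]
          exact ⟨by omega, Or.inl (by omega)⟩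
        exact hxw2 j hj i hiNear (heq ▸ hxw1 i hi)
      · intro i hi
        dsimp only
        rw [dif_pos hi]
        exact hxw2 i hi
    | succ M hM2k IH =>
      intro hM1n
      have hMn : M < n := by omega
      obtain ⟨f, hf1, hf2, hf3⟩ := IH (by omega)
      by_cases hcase1 : ∃ x ∈ listAt L M, ∀ i, M - k ≤ i → i < M → f i ≠ x
      · obtain ⟨x, hxM, hxfree⟩ := hcase1
        refine ⟨Function.update f M x, ?_, ?_, ?_⟩
        · intro i hi
          by_cases hiM : i = M
          · rw [hiM, Function.update_self]
            exact hiM ▸ hxM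
          · rw [Function.update_of_ne hiM]
            exact hf1 i (by omega)
        · intro i j hij hj hk'
          have hiM : i ≠ M := by omega
          rw [Function.update_of_ne hiM]
          by_cases hjM : j = M
          · rw [hjM, Function.update_self]
            exact hxfree i (by omega) (by omega)
          · rw [Function.update_of_ne hjM]
            exact hf2 i j hij (by omega) hk'
        · intro i hi w hw
          rw [Function.update_of_ne (by omega : i ≠ M)]
          exact hf3 i hi w hw
      · push_neg at hcase1
        by_cases hcase2 : ∃ u, (M - k ≤ u ∧ u < M ∧ f u ∈ listAt L M) ∧
            ∃ y ∈ listAt L u, y ≠ f u ∧ ∀ w, u - k ≤ w → w < M → w ≠ u → f w ≠ y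
        · obtain ⟨u, ⟨hu1, hu2, hfuM⟩, y, hyLu, hyne, hyfree⟩ := hcase2
          have hu2k : 2*k ≤ u := by
            by_contra hcon
            push_neg at hcon
            have hMNear : M ∈ Near n k u := by
              rw [Near, Finset.mem_erase, Finset.mem_union, Finset.mem_range]
              exact ⟨by omega, Or.inl (by omega)⟩
            exact hf3 u hcon M hMNear hfuM
          refine ⟨Function.update (Function.update f u y) M (f u), ?_, ?_, ?_⟩
          · intro i hi
            by_cases hiM : i = M
            · rw [hiM, Function.update_self]
              exact hiM ▸ hfuM
            · rw [Function.update_of_ne hiM]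
              by_cases hiu : i = u
              · rw [hiu, Function.update_self]
                exact hiu ▸ hyLu
              · rw [Function.update_of_ne hiu]
                exact hf1 i (by omega)
          · intro i j hij hj hk'
            have hiM : i ≠ M := by omega
            rw [Function.update_of_ne hiM]
            by_cases hjM : j = M
            · -- j = M
              subst hjM
              rw [Function.update_self]
              by_cases hiu : i = u
              · rw [hiu, Function.update_self]
                exact hyne
              · rw [Function.update_of_ne hiu]
                rcases Nat.lt_or_ge i u with h' | h'
                · exact hf2 i u h' hu2 (by omega)
                · have : u < i := by omega
                  exact (hf2 u i this (by omega) (by omega)).symm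
            · rw [Function.update_of_ne hjM]
              have hjM' : j < M := by omega
              by_cases hiu : i = u
              · subst hiu
                rw [Function.update_self, Function.update_of_ne (by omega : j ≠ i)]
                exact fun heq => hyfree j (by omega) hjM' (by omega) heq.symm
              · rw [Function.update_of_ne hiu]
                by_cases hju : j = u
                · subst hju
                  rw [Function.update_self]
                  exact hyfree i (by omega) (by omega) hiu
                · rw [Function.update_of_ne hju]
                  exact hf2 i j hij hjM' hk'
          · intro i hi w hw
            rw [Function.update_of_ne (by omega : i ≠ M),
              Function.update_of_ne (by omega : i ≠ u)]
            exact hf3 i hi w hw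
        · exfalso
          push_neg at hcase2
          have hMcard : (listAt L M).card = c := listAt_card hL hMn
          set E := (listAt L M).orderIsoOfFin hMcard with hE
          have hblock : ∀ j : Fin c, ∃ i, M - k ≤ i ∧ i < M ∧ f i = (E j : Fin s) :=
            fun j => hcase1 _ (E j).2
          choose U hU1 hU2 hU3 using hblock
          apply hG.2 M hM2k hMn U
          refine ⟨?_, fun j => ⟨hU1 j, hU2 j⟩, ?_⟩
          · intro a b hab
            have hEab : (E a : Fin s) = (E b : Fin s) := by rw [← hU3 a, ← hU3 b, hab]
            exact E.injective (Subtype.ext hEab)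
          · intro j
            refine ⟨(E j : Fin s), ?_, (E j).2, ?_⟩
            · rw [← hU3 j]
              exact hf1 (U j) (hU2 j)
            · intro y hyU hyne
              have hstuck := hcase2 (U j) ⟨hU1 j, hU2 j, by rw [hU3 j]; exact (E j).2⟩
                y hyU (by rw [hU3 j]; exact hyne)
              obtain ⟨w, hw1, hw2, hw3, hw4⟩ := hstuck
              by_cases hwu : ∃ i, w = U i
              · obtain ⟨i, hwi⟩ := hwu
                left
                have : y = (E i : Fin s) := by rw [← hU3 i, ← hwi, hw4]
                rw [this]
                exact (E i).2
              · right
                push_neg at hwu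
                have hUj1 := hU1 j
                refine ⟨w, by omega, hw2, hwu, ?_⟩
                rw [← hw4]
                exact hf1 w hw2
  obtain ⟨f, hf1, hf2, hf3⟩ := main n (by omega) (le_refl n)
  have key : ∀ (i j : ℕ), i < j → j < n → cycleDist n i j ≤ k → f i ≠ f j := by
    intro i j hij hjn hdist
    have h1 : (i + n - j) % n = i + n - j := Nat.mod_eq_of_lt (by omega)
    have h2 : (j + n - i) % n = j - i := by
      have heq : j + n - i = (j - i) + n := by omega
      rw [heq, Nat.add_mod_right]
      exact Nat.mod_eq_of_lt (by omega)
    rw [cycleDist, h1, h2, min_le_iff] at hdist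
    by_cases hcase : j - i ≤ k
    · exact hf2 i j hij hjn hcase
    · have hwrap : i + n - j ≤ k := by omega
      have hi2k : i < 2*k := by omega
      have hjNear : j ∈ Near n k i := by
        rw [Near, Finset.mem_erase, Finset.mem_union, Finset.mem_Ico]
        exact ⟨by omega, Or.inr ⟨by omega, hjn⟩⟩
      intro heq
      exact hf3 i hi2k j hjNear (heq ▸ hf1 j hjn)
  refine ⟨fun v => f v.val, ?_, ?_⟩
  · intro v
    have := hf1 v.val v.isLt
    rwa [listAt, dif_pos v.isLt, Fin.eta] at this
  · intro v w hadj
    obtain ⟨hvw, hdist⟩ := hadj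
    rcases Nat.lt_trichotomy v.val w.val with h | h | h
    · exact key v.val w.val h w.isLt hdist
    · exact absurd (Fin.ext h) hvw
    · have hdist' : cycleDist n w.val v.val ≤ k := by
        rw [cycleDist, min_comm] at hdist
        exact hdist
      exact (key w.val v.val h v.isLt hdist').symm

lemma allLists_eq_piFinset (n s c : ℕ) :
    allLists (Fin n) s c
      = Fintype.piFinset (fun _ : Fin n => (univ : Finset (Fin s)).powersetCard c) := by
  ext L
  simp [allLists, Fintype.mem_piFinset, Finset.mem_powersetCard, Finset.subset_univ]

lemma card_allLists (n s c : ℕ) : (allLists (Fin n) s c).card = (s.choose c)^n := by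
  rw [allLists_eq_piFinset, Fintype.card_piFinset]
  simp [Finset.card_powersetCard]

/-- Master counting lemma. -/
lemma master {n s c r : ℕ} (hcs : c ≤ s) (e : Fin r → Fin n) (he : Function.Injective e)
    (T : (Fin n → Finset (Fin s)) → Fin r → Finset (Finset (Fin s)))
    (hdep : ∀ g g' : Fin n → Finset (Fin s),
      (∀ w, (∀ j, e j ≠ w) → g w = g' w) → ∀ j, T g j = T g' j)
    (D : ℕ) (hD : ∀ g ∈ allLists (Fin n) s c, ∀ j, (T g j).card ≤ D)
    (P : (Fin n → Finset (Fin s)) → Prop)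
    (hP : ∀ L ∈ allLists (Fin n) s c, P L → ∀ j, L (e j) ∈ T L j) :
    ((allLists (Fin n) s c).filter P).card * (s.choose c)^r ≤ (s.choose c)^n * D^r := by
  classical
  have hrn : r ≤ n := by
    have := Fintype.card_le_of_injective e he
    simpa using this
  obtain ⟨A₀, -, hA₀⟩ := Finset.exists_subset_card_eq (s := (univ : Finset (Fin s))) (n := c) (by simpa using hcs)
  set o : (Fin n → Finset (Fin s)) → (Fin n → Finset (Fin s)) :=
    fun L w => if ∀ j, e j ≠ w then L w else A₀ with ho
  set G := (allLists (Fin n) s c).filter (fun g => ∀ j, g (e j) = A₀) with hGdef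
  have hocard : ∀ L ∈ allLists (Fin n) s c, o L ∈ G := by
    intro L hL
    simp only [allLists, mem_filter, mem_univ, true_and] at hL
    rw [hGdef, mem_filter]
    constructor
    · simp only [allLists, mem_filter, mem_univ, true_and]
      intro v
      by_cases hw : ∀ j, e j ≠ v
      · simpa [ho, hw] using hL v
      · simp [ho, hw, hA₀]
    · intro j
      have hne : ¬ (∀ j', e j' ≠ e j) := by push_neg; exact ⟨j, rfl⟩
      simp [ho, hne]
  have hGall : ∀ g ∈ G, g ∈ allLists (Fin n) s c := by
    intro g hg; exact Finset.mem_of_mem_filter _ (hGdef ▸ hg)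
  have hcard : ((allLists (Fin n) s c).filter P).card ≤
      (G.sigma (fun g => Fintype.piFinset (fun j => T g j))).card := by
    apply Finset.card_le_card_of_injOn
      (fun L => (⟨o L, fun j => L (e j)⟩ : Σ _g : Fin n → Finset (Fin s), Fin r → Finset (Fin s)))
    · intro L hL
      have hLall := Finset.mem_of_mem_filter _ hL
      rw [Finset.mem_coe, Finset.mem_sigma]
      refine ⟨hocard L hLall, ?_⟩
      rw [Fintype.mem_piFinset]
      intro j
      have hT : T (o L) j = T L j := hdep _ _ (fun w hw => by simp [ho, hw]) j
      rw [hT]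
      exact hP L hLall ((Finset.mem_filter.1 hL).2) j
    · intro L hL L' hL' hEq
      rw [Sigma.ext_iff] at hEq
      funext w
      by_cases hw : ∀ j, e j ≠ w
      · have := congrFun hEq.1 w
        simpa [ho, hw] using this
      · push_neg at hw
        obtain ⟨j, hj⟩ := hw
        have h2 := congrFun (eq_of_heq hEq.2) j
        simp only at h2
        rw [hj] at h2
        exact h2
  have hsum : (G.sigma fun g => Fintype.piFinset fun j => T g j).card ≤ G.card * D^r := by
    rw [Finset.card_sigma]
    calc ∑ g ∈ G, (Fintype.piFinset fun j => T g j).card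
        ≤ ∑ _g ∈ G, D^r := by
          refine Finset.sum_le_sum (fun g hg => ?_)
          rw [Fintype.card_piFinset]
          have := Finset.prod_le_pow_card (univ : Finset (Fin r))
            (fun j => (T g j).card) D (fun j _ => hD g (hGall g hg) j)
          simpa using this
      _ = G.card * D^r := by rw [Finset.sum_const, smul_eq_mul]
  have hGcard : G.card = (s.choose c)^(n - r) := by
    have hGeq : G = Fintype.piFinset (fun w : Fin n =>
        if ∀ j, e j ≠ w then (univ : Finset (Fin s)).powersetCard c else {A₀}) := by
      ext g
      simp only [hGdef, mem_filter, allLists, mem_univ, true_and, Fintype.mem_piFinset]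
      constructor
      · rintro ⟨hcards, hfix⟩ w
        by_cases hw : ∀ j, e j ≠ w
        · simp [hw, Finset.mem_powersetCard, hcards w]
        · push_neg at hw
          obtain ⟨j, hj⟩ := hw
          rw [if_neg (by push_neg; exact ⟨j, hj⟩), Finset.mem_singleton, ← hj]
          exact hfix j
      · intro hmem
        constructor
        · intro v
          have := hmem v
          by_cases hw : ∀ j, e j ≠ v
          · rw [if_pos hw] at this
            exact (Finset.mem_powersetCard.1 this).2
          · rw [if_neg hw] at this
            rw [Finset.mem_singleton.1 this, hA₀]
        · intro j
          have := hmem (e j)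
          have hne : ¬ (∀ j', e j' ≠ e j) := by push_neg; exact ⟨j, rfl⟩
          rw [if_neg hne] at this
          exact Finset.mem_singleton.1 this
    rw [hGeq, Fintype.card_piFinset]
    have hsplit := Finset.prod_filter_mul_prod_filter_not (univ : Finset (Fin n))
      (fun w => ∀ j, e j ≠ w)
      (fun w => (if ∀ j, e j ≠ w then (univ : Finset (Fin s)).powersetCard c else {A₀}).card)
    rw [← hsplit]
    have h1 : ∀ w ∈ (univ : Finset (Fin n)).filter (fun w => ∀ j, e j ≠ w),
        (if ∀ j, e j ≠ w then (univ : Finset (Fin s)).powersetCard c else {A₀}).card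
          = s.choose c := by
      intro w hw
      rw [if_pos (Finset.mem_filter.1 hw).2, Finset.card_powersetCard]
      simp
    have h2 : ∀ w ∈ (univ : Finset (Fin n)).filter (fun w => ¬ ∀ j, e j ≠ w),
        (if ∀ j, e j ≠ w then (univ : Finset (Fin s)).powersetCard c else {A₀}).card = 1 := by
      intro w hw
      rw [if_neg (Finset.mem_filter.1 hw).2]
      simp
    rw [Finset.prod_congr rfl h1, Finset.prod_congr rfl h2, Finset.prod_const,
      Finset.prod_const_one, mul_one]
    congr 1
    have hcompl : (univ : Finset (Fin n)).filter (fun w => ¬ ∀ j, e j ≠ w)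
        = Finset.image e univ := by
      ext w
      simp only [Finset.mem_filter, mem_univ, true_and, Finset.mem_image]
      push_neg
      exact Iff.rfl
    have hc2 : ((univ : Finset (Fin n)).filter (fun w => ¬ ∀ j, e j ≠ w)).card = r := by
      rw [hcompl, Finset.card_image_of_injective _ he]
      simp
    have hsum2 := Finset.card_filter_add_card_filter_not (s := (univ : Finset (Fin n)))
      (p := fun w => ∀ j, e j ≠ w)
    have huniv : (univ : Finset (Fin n)).card = n := by simp
    omega
  calc ((allLists (Fin n) s c).filter P).card * (s.choose c)^r
      ≤ (G.card * D^r) * (s.choose c)^r :=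
        Nat.mul_le_mul_right _ (hcard.trans hsum)
    _ = ((s.choose c)^(n-r) * (s.choose c)^r) * D^r := by rw [hGcard]; ring
    _ = (s.choose c)^n * D^r := by rw [← pow_add, Nat.sub_add_cancel hrn]

lemma winBad_count {n s c k : ℕ} (hcs : c ≤ s) (hc : 1 ≤ c) {v : ℕ} (hv : v < 2*k)
    (hn : 4*k + 4 ≤ n) :
    ((allLists (Fin n) s c).filter (winBad n k v)).card * (s.choose c)
      ≤ (s.choose c)^n * ((4*k*c).choose c) := by
  classical
  have hvn : v < n := by omega
  set N : (Fin n → Finset (Fin s)) → Finset (Fin s) :=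
    fun g => (Near n k v).biUnion (fun w => listAt g w) with hN
  have hNearcard : (Near n k v).card ≤ 4*k := by
    have h1 : v ∈ (Finset.range (v + 2*k + 1) ∪ Finset.Ico (n + v - 2*k) n) := by
      rw [Finset.mem_union, Finset.mem_range]
      left; omega
    rw [Near, Finset.card_erase_of_mem h1]
    have h2 := Finset.card_union_le (Finset.range (v + 2*k + 1)) (Finset.Ico (n + v - 2*k) n)
    rw [Finset.card_range, Nat.card_Ico] at h2
    omega
  have hNcard : ∀ g ∈ allLists (Fin n) s c, (N g).card ≤ 4*k*c := by
    intro g hg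
    calc (N g).card ≤ ∑ w ∈ Near n k v, (listAt g w).card := Finset.card_biUnion_le
      _ ≤ ∑ _w ∈ Near n k v, c := Finset.sum_le_sum (fun w _ => listAt_card_le hg w)
      _ = (Near n k v).card * c := by rw [Finset.sum_const, smul_eq_mul]
      _ ≤ 4*k*c := Nat.mul_le_mul_right c hNearcard
  have key := master (n := n) hcs (fun _ : Fin 1 => (⟨v, hvn⟩ : Fin n))
    (fun a b _ => Subsingleton.elim a b)
    (fun g _ => ((univ : Finset (Fin s)).powersetCard c).filter (fun T => T ⊆ N g))
    ?_ ((4*k*c).choose c) ?_ (winBad n k v) ?_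
  · simpa using key
  · -- hdep
    intro g g' hagree j
    have hNg : N g = N g' := by
      refine Finset.biUnion_congr rfl (fun w hw => ?_)
      have hwv : w ≠ v := (Finset.mem_erase.1 hw).1
      unfold listAt
      by_cases hwn : w < n
      · rw [dif_pos hwn, dif_pos hwn]
        exact hagree ⟨w, hwn⟩ (fun _ => Fin.ne_of_val_ne (fun h => hwv (by simpa using h.symm)))
      · rw [dif_neg hwn, dif_neg hwn]
    rw [hNg]
  · -- hD
    intro g hg _
    calc (((univ : Finset (Fin s)).powersetCard c).filter (fun T => T ⊆ N g)).card
        ≤ ((N g).powersetCard c).card := by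
          apply Finset.card_le_card
          intro T hT
          rw [Finset.mem_filter, Finset.mem_powersetCard] at hT
          rw [Finset.mem_powersetCard]
          exact ⟨hT.2, hT.1.2⟩
      _ = ((N g).card).choose c := Finset.card_powersetCard c _
      _ ≤ (4*k*c).choose c := Nat.choose_le_choose c (hNcard g hg)
  · -- hP
    intro L hL hwin j
    rw [Finset.mem_filter, Finset.mem_powersetCard]
    refine ⟨⟨Finset.subset_univ _, ?_⟩, ?_⟩
    · simp only [allLists, Finset.mem_filter] at hL
      exact hL.2 _
    · intro x hx
      have hx' : x ∈ listAt L v := by rw [listAt, dif_pos hvn]; exact hx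
      obtain ⟨w, hw, hxw⟩ := hwin x hx'
      exact Finset.mem_biUnion.2 ⟨w, hw, hxw⟩

lemma cliqueBad_count {n s c k M : ℕ} (hcs : c ≤ s) (hc : 1 ≤ c)
    (hM : 2*k ≤ M) (hMn : M < n) (u : Fin c → ℕ) :
    ((allLists (Fin n) s c).filter (cliqueBad n k M u)).card * (s.choose c)^c
      ≤ (s.choose c)^n * (c * ((c + 2*k*c).choose (c-1)))^c := by
  classical
  by_cases hu : Function.Injective u ∧ ∀ j, M - k ≤ u j ∧ u j < M
  case neg =>
    have hempty : (allLists (Fin n) s c).filter (cliqueBad n k M u) = ∅ := by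
      rw [Finset.filter_eq_empty_iff]
      intro L _ hbad
      exact hu ⟨hbad.1, hbad.2.1⟩
    simp [hempty]
  case pos =>
  obtain ⟨huinj, hub⟩ := hu
  set e : Fin c → Fin n := fun j => ⟨u j, lt_trans (hub j).2 hMn⟩ with he
  have heinj : Function.Injective e := by
    intro a b h
    apply huinj
    simpa [he, Fin.ext_iff] using h
  set S : (Fin n → Finset (Fin s)) → Finset (Fin s) := fun g =>
    listAt g M ∪ ((Finset.Ico (M - 2*k) M).filter (fun w => ∀ i, w ≠ u i)).biUnion
      (fun w => listAt g w) with hS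
  have hScard : ∀ g ∈ allLists (Fin n) s c, (S g).card ≤ c + 2*k*c := by
    intro g hg
    calc (S g).card ≤ (listAt g M).card
          + (((Finset.Ico (M - 2*k) M).filter (fun w => ∀ i, w ≠ u i)).biUnion
              (fun w => listAt g w)).card := Finset.card_union_le _ _
      _ ≤ c + 2*k*c := by
          refine Nat.add_le_add (listAt_card_le hg M) ?_
          calc (((Finset.Ico (M - 2*k) M).filter (fun w => ∀ i, w ≠ u i)).biUnion
                (fun w => listAt g w)).card
              ≤ ∑ w ∈ (Finset.Ico (M - 2*k) M).filter (fun w => ∀ i, w ≠ u i),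
                  (listAt g w).card := Finset.card_biUnion_le
            _ ≤ ∑ _w ∈ (Finset.Ico (M - 2*k) M).filter (fun w => ∀ i, w ≠ u i), c :=
                Finset.sum_le_sum (fun w _ => listAt_card_le hg w)
            _ = ((Finset.Ico (M - 2*k) M).filter (fun w => ∀ i, w ≠ u i)).card * c := by
                rw [Finset.sum_const, smul_eq_mul]
            _ ≤ 2*k*c := by
                refine Nat.mul_le_mul_right c ?_
                calc ((Finset.Ico (M - 2*k) M).filter (fun w => ∀ i, w ≠ u i)).card
                    ≤ (Finset.Ico (M - 2*k) M).card := Finset.card_filter_le _ _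
                  _ ≤ 2*k := by rw [Nat.card_Ico]; omega
  have key := master (n := n) hcs e heinj
    (fun g _ => ((univ : Finset (Fin s)).powersetCard c).filter
      (fun T => ∃ x ∈ T, x ∈ listAt g M ∧ ∀ y ∈ T, y ≠ x → y ∈ S g))
    ?_ (c * ((c + 2*k*c).choose (c-1))) ?_ (cliqueBad n k M u) ?_
  · exact key
  · -- hdep
    intro g g' hagree j
    have h1 : listAt g M = listAt g' M := by
      unfold listAt
      rw [dif_pos hMn, dif_pos hMn]
      exact hagree ⟨M, hMn⟩ (fun i => Fin.ne_of_val_ne (Nat.ne_of_lt (hub i).2))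
    have h2 : S g = S g' := by
      rw [hS]
      simp only [h1]
      congr 1
      refine Finset.biUnion_congr rfl (fun w hw => ?_)
      rw [Finset.mem_filter, Finset.mem_Ico] at hw
      have hwn : w < n := lt_trans hw.1.2 hMn
      unfold listAt
      rw [dif_pos hwn, dif_pos hwn]
      exact hagree ⟨w, hwn⟩ (fun i => Fin.ne_of_val_ne (fun h => hw.2 i (by simpa using h.symm)))
    rw [h1, h2]
  · -- hD
    intro g hg j
    calc (((univ : Finset (Fin s)).powersetCard c).filter
          (fun T => ∃ x ∈ T, x ∈ listAt g M ∧ ∀ y ∈ T, y ≠ x → y ∈ S g)).card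
        ≤ ((listAt g M).biUnion (fun x => ((S g).powersetCard (c-1)).image (insert x))).card := by
          apply Finset.card_le_card
          intro T hT
          rw [Finset.mem_filter, Finset.mem_powersetCard] at hT
          obtain ⟨⟨-, hTc⟩, x, hxT, hxM, hcov⟩ := hT
          refine Finset.mem_biUnion.2 ⟨x, hxM, Finset.mem_image.2 ⟨T.erase x, ?_, Finset.insert_erase hxT⟩⟩
          rw [Finset.mem_powersetCard]
          constructor
          · intro y hy
            obtain ⟨hyx, hyT⟩ := Finset.mem_erase.1 hy
            exact hcov y hyT hyx
          · rw [Finset.card_erase_of_mem hxT, hTc]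
      _ ≤ ∑ x ∈ listAt g M, (((S g).powersetCard (c-1)).image (insert x)).card :=
          Finset.card_biUnion_le
      _ ≤ ∑ _x ∈ listAt g M, ((c + 2*k*c).choose (c-1)) := by
          refine Finset.sum_le_sum (fun x _ => ?_)
          calc (((S g).powersetCard (c-1)).image (insert x)).card
              ≤ ((S g).powersetCard (c-1)).card := Finset.card_image_le
            _ = ((S g).card).choose (c-1) := Finset.card_powersetCard _ _
            _ ≤ (c + 2*k*c).choose (c-1) := Nat.choose_le_choose _ (hScard g hg)
      _ = (listAt g M).card * ((c + 2*k*c).choose (c-1)) := by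
          rw [Finset.sum_const, smul_eq_mul]
      _ ≤ c * ((c + 2*k*c).choose (c-1)) :=
          Nat.mul_le_mul_right _ (listAt_card_le hg M)
  · -- hP
    intro L hL hbad j
    rw [Finset.mem_filter, Finset.mem_powersetCard]
    have hLe : listAt L (u j) = L (e j) := by
      rw [listAt, dif_pos (lt_trans (hub j).2 hMn)]
    refine ⟨⟨Finset.subset_univ _, ?_⟩, ?_⟩
    · simp only [allLists, Finset.mem_filter] at hL
      exact hL.2 _
    · obtain ⟨x, hxu, hxM, hcov⟩ := hbad.2.2 j
      rw [hLe] at hxu hcov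
      refine ⟨x, hxu, hxM, fun y hy hyx => ?_⟩
      rcases hcov y hy hyx with hyM | ⟨w, hw1, hw2, hw3, hy4⟩
      · exact Finset.mem_union_left _ hyM
      · refine Finset.mem_union_right _ (Finset.mem_biUnion.2 ⟨w, ?_, hy4⟩)
        rw [Finset.mem_filter, Finset.mem_Ico]
        exact ⟨⟨hw1, hw2⟩, hw3⟩

lemma bad_count {n s c k : ℕ} (hcs : c ≤ s) (hc : 1 ≤ c) (hck : c ≤ k)
    (hn : 4*k + 4 ≤ n) :
    (((allLists (Fin n) s c).filter (fun L => ¬ GoodL n k c L)).card : ℝ)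
      ≤ ((s.choose c)^n : ℝ) *
        ((2*k) * ((4*k*c).choose c) / (s.choose c)
          + n * k^c * ((c * ((c + 2*k*c).choose (c-1)) : ℝ) / (s.choose c))^c) := by
  classical
  have hC0' : (0:ℝ) < ((s.choose c : ℕ) : ℝ) := by
    exact_mod_cast Nat.choose_pos hcs
  set A := (Finset.range (2*k)).biUnion
      (fun v => (allLists (Fin n) s c).filter (winBad n k v)) with hA
  set B := (Finset.Ico (2*k) n).biUnion (fun M =>
      (Fintype.piFinset (fun _ : Fin c => Finset.Ico (M-k) M)).biUnion
        (fun u => (allLists (Fin n) s c).filter (cliqueBad n k M u))) with hB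
  have hsubset : (allLists (Fin n) s c).filter (fun L => ¬ GoodL n k c L) ⊆ A ∪ B := by
    intro L hL
    rw [Finset.mem_filter] at hL
    obtain ⟨hLall, hLbad⟩ := hL
    rw [GoodL, not_and_or] at hLbad
    rcases hLbad with h | h
    · push_neg at h
      obtain ⟨v, hv, hbad⟩ := h
      refine Finset.mem_union_left _ (Finset.mem_biUnion.2 ⟨v, Finset.mem_range.2 hv, ?_⟩)
      exact Finset.mem_filter.2 ⟨hLall, hbad⟩
    · push_neg at h
      obtain ⟨M, hM1, hM2, u, hbad⟩ := h
      refine Finset.mem_union_right _ (Finset.mem_biUnion.2 ⟨M, Finset.mem_Ico.2 ⟨hM1, hM2⟩, ?_⟩)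
      refine Finset.mem_biUnion.2 ⟨u, ?_, Finset.mem_filter.2 ⟨hLall, hbad⟩⟩
      rw [Fintype.mem_piFinset]
      intro j
      rw [Finset.mem_Ico]
      exact hbad.2.1 j
  have hcard : ((allLists (Fin n) s c).filter (fun L => ¬ GoodL n k c L)).card
      ≤ ∑ v ∈ Finset.range (2*k), ((allLists (Fin n) s c).filter (winBad n k v)).card
        + ∑ M ∈ Finset.Ico (2*k) n,
            ∑ u ∈ Fintype.piFinset (fun _ : Fin c => Finset.Ico (M-k) M),
              ((allLists (Fin n) s c).filter (cliqueBad n k M u)).card := by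
    calc ((allLists (Fin n) s c).filter (fun L => ¬ GoodL n k c L)).card
        ≤ (A ∪ B).card := Finset.card_le_card hsubset
      _ ≤ A.card + B.card := Finset.card_union_le _ _
      _ ≤ _ := Nat.add_le_add Finset.card_biUnion_le
            (le_trans Finset.card_biUnion_le
              (Finset.sum_le_sum (fun M _ => Finset.card_biUnion_le)))
  have hwinR : ∀ v ∈ Finset.range (2*k),
      (((allLists (Fin n) s c).filter (winBad n k v)).card : ℝ)
        ≤ ((s.choose c : ℕ) : ℝ)^n * ((4*k*c).choose c : ℕ) / ((s.choose c : ℕ):ℝ) := by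
    intro v hv
    rw [le_div_iff₀ hC0']
    exact_mod_cast winBad_count hcs hc (Finset.mem_range.1 hv) hn
  have hclR : ∀ M ∈ Finset.Ico (2*k) n, ∀ u : Fin c → ℕ,
      (((allLists (Fin n) s c).filter (cliqueBad n k M u)).card : ℝ)
        ≤ ((s.choose c : ℕ):ℝ)^n
            * (((c * ((c + 2*k*c).choose (c-1)) : ℕ):ℝ) / ((s.choose c : ℕ):ℝ))^c := by
    intro M hM u
    rw [Finset.mem_Ico] at hM
    have h2 : (((allLists (Fin n) s c).filter (cliqueBad n k M u)).card : ℝ)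
        * ((s.choose c : ℕ):ℝ)^c
        ≤ ((s.choose c : ℕ):ℝ)^n * ((c * ((c + 2*k*c).choose (c-1)) : ℕ):ℝ)^c := by
      exact_mod_cast cliqueBad_count hcs hc hM.1 hM.2 u
    rw [div_pow, ← mul_div_assoc, le_div_iff₀ (by positivity)]
    exact h2
  have hfinal : (((allLists (Fin n) s c).filter (fun L => ¬ GoodL n k c L)).card : ℝ)
      ≤ (2*k) * (((s.choose c : ℕ):ℝ)^n * ((4*k*c).choose c : ℕ) / ((s.choose c : ℕ):ℝ))
        + n * k^c * (((s.choose c : ℕ):ℝ)^n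
            * (((c * ((c + 2*k*c).choose (c-1)) : ℕ):ℝ) / ((s.choose c : ℕ):ℝ))^c) := by
    have hcast : (((allLists (Fin n) s c).filter (fun L => ¬ GoodL n k c L)).card : ℝ)
        ≤ (∑ v ∈ Finset.range (2*k),
            ((allLists (Fin n) s c).filter (winBad n k v)).card
          + ∑ M ∈ Finset.Ico (2*k) n,
              ∑ u ∈ Fintype.piFinset (fun _ : Fin c => Finset.Ico (M-k) M),
                ((allLists (Fin n) s c).filter (cliqueBad n k M u)).card : ℕ) := by
      exact_mod_cast hcard
    refine hcast.trans ?_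
    push_cast
    refine add_le_add ?_ ?_
    · calc (∑ v ∈ Finset.range (2*k),
            (((allLists (Fin n) s c).filter (winBad n k v)).card : ℝ))
          ≤ ∑ _v ∈ Finset.range (2*k),
              ((s.choose c : ℕ):ℝ)^n * ((4*k*c).choose c : ℕ) / ((s.choose c : ℕ):ℝ) :=
            Finset.sum_le_sum hwinR
        _ = (2*k) * (((s.choose c : ℕ):ℝ)^n * ((4*k*c).choose c : ℕ) / ((s.choose c : ℕ):ℝ)) := by
            rw [Finset.sum_const, Finset.card_range]
            push_cast
            ring
    · calc (∑ M ∈ Finset.Ico (2*k) n,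
            ∑ u ∈ Fintype.piFinset (fun _ : Fin c => Finset.Ico (M-k) M),
              (((allLists (Fin n) s c).filter (cliqueBad n k M u)).card : ℝ))
          ≤ ∑ M ∈ Finset.Ico (2*k) n,
              ∑ _u ∈ Fintype.piFinset (fun _ : Fin c => Finset.Ico (M-k) M),
                ((s.choose c : ℕ):ℝ)^n
                  * (((c * ((c + 2*k*c).choose (c-1)) : ℕ):ℝ) / ((s.choose c : ℕ):ℝ))^c := by
            refine Finset.sum_le_sum (fun M hM => Finset.sum_le_sum (fun u _ => hclR M hM u))
        _ ≤ ∑ _M ∈ Finset.Ico (2*k) n, (k:ℝ)^c * (((s.choose c : ℕ):ℝ)^n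
                  * (((c * ((c + 2*k*c).choose (c-1)) : ℕ):ℝ) / ((s.choose c : ℕ):ℝ))^c) := by
            refine Finset.sum_le_sum (fun M hM => ?_)
            rw [Finset.sum_const, nsmul_eq_mul]
            have hpicard : (Fintype.piFinset (fun _ : Fin c => Finset.Ico (M-k) M)).card = k^c := by
              rw [Fintype.card_piFinset]
              rw [Finset.mem_Ico] at hM
              simp [Nat.card_Ico]
              congr 1
              omega
            rw [hpicard]
            push_cast
            exact le_refl _
        _ ≤ n * k^c * (((s.choose c : ℕ):ℝ)^n
                  * (((c * ((c + 2*k*c).choose (c-1)) : ℕ):ℝ) / ((s.choose c : ℕ):ℝ))^c) := by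
            rw [Finset.sum_const, nsmul_eq_mul, Nat.card_Ico]
            have h1 : ((n - 2*k : ℕ):ℝ) ≤ (n:ℝ) := by
              have : (n - 2*k : ℕ) ≤ n := Nat.sub_le _ _
              exact_mod_cast this
            have h2 : (0:ℝ) ≤ (k:ℝ)^c * (((s.choose c : ℕ):ℝ)^n
                  * (((c * ((c + 2*k*c).choose (c-1)) : ℕ):ℝ) / ((s.choose c : ℕ):ℝ))^c) := by
              positivity
            nlinarith
        _ = (n:ℝ) * (k:ℝ)^c * (((s.choose c : ℕ):ℝ)^n
                  * ((c:ℝ) * (((c + 2*k*c).choose (c-1) : ℕ):ℝ) / ((s.choose c : ℕ):ℝ))^c) := by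
            push_cast
            ring
  refine hfinal.trans (le_of_eq ?_)
  push_cast
  ring

end CPAux

theorem prob_colourable_tendsto_one (c k : ℕ) (hc : 1 ≤ c) (hck : c ≤ k)
    (s : ℕ → ℕ) (hs : ∀ n, c ≤ s n)
    (homega : (fun n : ℕ => (n : ℝ) ^ ((1 : ℝ) / (c^2 : ℝ))) =o[atTop]
      fun n => (s n : ℝ)) :
    Tendsto (fun n => probEvent (Fin n) (s n) c (colourable (cyclePower n k)))
      atTop (nhds 1) := by
  classical
  have hk1 : 1 ≤ k := le_trans hc hck
  have hcR : (0:ℝ) < (c:ℝ) := by exact_mod_cast hc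
  -- s n tends to infinity
  have hrpow : Tendsto (fun n : ℕ => (n:ℝ) ^ ((1:ℝ)/(c^2:ℝ))) atTop atTop :=
    (tendsto_rpow_atTop (by positivity)).comp tendsto_natCast_atTop_atTop
  have hsR : Tendsto (fun n => (s n : ℝ)) atTop atTop := by
    apply tendsto_atTop_mono' atTop ?_ hrpow
    filter_upwards [homega.def (by norm_num : (0:ℝ) < 1)] with n hn
    have h2 : (0:ℝ) ≤ (n:ℝ) ^ ((1:ℝ)/(c^2:ℝ)) := Real.rpow_nonneg (Nat.cast_nonneg n) _
    rw [Real.norm_eq_abs, Real.norm_eq_abs, abs_of_nonneg h2,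
      abs_of_nonneg (by positivity : (0:ℝ) ≤ (s n:ℝ)), one_mul] at hn
    exact hn
  have hsN : Tendsto s atTop atTop := tendsto_natCast_atTop_iff.mp hsR
  have hchoose_lb : ∀ m : ℕ, (m + 1 - c)^c ≤ c.factorial * m.choose c := by
    intro m
    rw [← Nat.descFactorial_eq_factorial_mul_choose]
    exact Nat.pow_sub_le_descFactorial m c
  have hCN : Tendsto (fun n => (s n).choose c) atTop atTop := by
    rw [tendsto_atTop]
    intro b
    filter_upwards [hsN.eventually_ge_atTop (c.factorial * b + c)] with n hsn
    have h1 := hchoose_lb (s n)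
    have h2 : s n + 1 - c ≤ (s n + 1 - c)^c := Nat.le_self_pow (by omega) _
    have h3 : c.factorial * b < c.factorial * ((s n).choose c) := by omega
    exact (Nat.lt_of_mul_lt_mul_left h3).le
  have hCR : Tendsto (fun n => ((s n).choose c : ℝ)) atTop atTop :=
    tendsto_natCast_atTop_atTop.comp hCN
  -- little-o after raising to the power c^2
  have hlo : (fun n : ℕ => (n:ℝ)) =o[atTop] (fun n => (s n : ℝ)^(c^2)) := by
    have hpow := homega.pow (n := c^2) (by positivity)
    have hLHS : ∀ n : ℕ, ((fun n : ℕ => (n:ℝ) ^ ((1:ℝ)/(c^2:ℝ)))^(c^2)) n = (n:ℝ) := by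
      intro n
      show ((n:ℝ) ^ ((1:ℝ)/(c^2:ℝ)))^(c^2 : ℕ) = (n:ℝ)
      rw [← Real.rpow_natCast ((n:ℝ) ^ ((1:ℝ)/(c^2:ℝ))) (c^2),
        ← Real.rpow_mul (Nat.cast_nonneg n)]
      rw [show (1:ℝ)/(c^2:ℝ) * ((c^2 : ℕ):ℝ) = 1 by push_cast; field_simp]
      exact Real.rpow_one _
    have hRHS : ∀ n : ℕ, ((fun n : ℕ => (s n:ℝ))^(c^2)) n = (s n:ℝ)^(c^2) := fun n => rfl
    exact hpow.congr hLHS hRHS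
  have hdiv : Tendsto (fun n : ℕ => (n:ℝ) / (s n:ℝ)^(c^2)) atTop (nhds 0) :=
    hlo.tendsto_div_nhds_zero
  -- the bound function
  set B : ℕ → ℝ := fun n : ℕ => (2*(k:ℝ)) * (((4*k*c).choose c : ℕ) : ℝ) / (((s n).choose c : ℕ) : ℝ)
      + (n:ℝ) * (k:ℝ)^c * ((((c * ((c + 2*k*c).choose (c-1)) : ℕ)) : ℝ)
          / (((s n).choose c : ℕ) : ℝ))^c with hB
  -- main eventual bounds
  have hmain : ∀ᶠ n in atTop,
      1 - B n ≤ probEvent (Fin n) (s n) c (colourable (cyclePower n k)) ∧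
      probEvent (Fin n) (s n) c (colourable (cyclePower n k)) ≤ 1 := by
    filter_upwards [eventually_ge_atTop (4*k+4)] with n hn
    have hcard_all : ((allLists (Fin n) (s n) c).card : ℝ) = (((s n).choose c : ℕ) : ℝ)^n := by
      exact_mod_cast CPAux.card_allLists n (s n) c
    have hCpos : (0:ℝ) < (((s n).choose c : ℕ) : ℝ) := by
      exact_mod_cast Nat.choose_pos (hs n)
    have hpow_pos : (0:ℝ) < (((s n).choose c : ℕ) : ℝ)^n := by positivity
    constructor
    · -- lower bound
      have hsub : (allLists (Fin n) (s n) c).filter (CPAux.GoodL n k c)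
          ⊆ (allLists (Fin n) (s n) c).filter (colourable (cyclePower n k)) := by
        intro Ll hLm
        rw [Finset.mem_filter] at hLm ⊢
        exact ⟨hLm.1, CPAux.good_colourable hc hck hn hLm.1 hLm.2⟩
      have hsplit := Finset.card_filter_add_card_filter_not
        (s := allLists (Fin n) (s n) c) (p := CPAux.GoodL n k c)
      have hbc := CPAux.bad_count (n := n) (s := s n) (c := c) (k := k) (hs n) hc hck hn
      have hbcB : ((((allLists (Fin n) (s n) c)).filter
            (fun Ll => ¬ CPAux.GoodL n k c Ll)).card : ℝ)
          ≤ (((s n).choose c : ℕ) : ℝ)^n * B n := by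
        refine hbc.trans (le_of_eq ?_)
        rw [hB]
        push_cast
        ring
      have hgood : (((allLists (Fin n) (s n) c).filter (CPAux.GoodL n k c)).card : ℝ)
          + ((((allLists (Fin n) (s n) c)).filter
              (fun Ll => ¬ CPAux.GoodL n k c Ll)).card : ℝ)
          = (((s n).choose c : ℕ) : ℝ)^n := by
        rw [← hcard_all]
        exact_mod_cast hsplit
      have hcol : (((allLists (Fin n) (s n) c).filter (CPAux.GoodL n k c)).card : ℝ)
          ≤ (((allLists (Fin n) (s n) c)).filter (colourable (cyclePower n k))).card := by
        exact_mod_cast Finset.card_le_card hsub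
      rw [probEvent, hcard_all, le_div_iff₀ hpow_pos]
      nlinarith [hbcB, hgood, hcol]
    · rw [probEvent, div_le_one (by rw [hcard_all]; positivity)]
      exact_mod_cast Finset.card_le_card (Finset.filter_subset _ _)
  -- B tends to 0
  have hterm1 : Tendsto (fun n : ℕ => (2*(k:ℝ)) * (((4*k*c).choose c : ℕ) : ℝ)
      / (((s n).choose c : ℕ) : ℝ)) atTop (nhds 0) :=
    tendsto_const_nhds.div_atTop hCR
  have hterm2 : Tendsto (fun n : ℕ => (n:ℝ) * (k:ℝ)^c
      * ((((c * ((c + 2*k*c).choose (c-1)) : ℕ)) : ℝ) / (((s n).choose c : ℕ) : ℝ))^c)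
      atTop (nhds 0) := by
    set Dc : ℝ := (((c * ((c + 2*k*c).choose (c-1)) : ℕ)) : ℝ) with hDc
    have hDc0 : 0 ≤ Dc := by rw [hDc]; positivity
    apply squeeze_zero' (g := fun n : ℕ => ((k:ℝ)^c * Dc^c * (c.factorial:ℝ)^c * 2^(c^2))
      * ((n:ℝ)/(s n:ℝ)^(c^2)))
    · filter_upwards [] with n
      positivity
    · filter_upwards [hsN.eventually_ge_atTop (2*c+2)] with n hsn
      have hs0 : (0:ℝ) < (s n : ℝ) := by
        have : 0 < s n := by omega
        exact_mod_cast this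
      have hfac0 : (0:ℝ) < (c.factorial : ℝ) := by exact_mod_cast Nat.factorial_pos c
      have hCge : ((s n:ℝ)/2)^c / (c.factorial:ℝ) ≤ (((s n).choose c : ℕ) : ℝ) := by
        have h1 : (((s n + 1 - c:ℕ):ℝ))^c ≤ (c.factorial:ℝ) * (((s n).choose c : ℕ) : ℝ) := by
          exact_mod_cast hchoose_lb (s n)
        have h3 : s n ≤ 2 * (s n + 1 - c) := by omega
        have h4 : (s n:ℝ) ≤ 2 * ((s n + 1 - c:ℕ):ℝ) := by exact_mod_cast h3
        have h5 : ((s n:ℝ)/2)^c ≤ (((s n + 1 - c:ℕ):ℝ))^c := by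
          apply pow_le_pow_left₀ (by positivity)
          linarith
        rw [div_le_iff₀ hfac0]
        exact h5.trans (h1.trans_eq (mul_comm _ _))
      have hCpos : (0:ℝ) < (((s n).choose c : ℕ) : ℝ) := by
        exact_mod_cast Nat.choose_pos (hs n)
      have hden_pos : (0:ℝ) < ((s n:ℝ)/2)^c / (c.factorial:ℝ) := by positivity
      calc (n:ℝ) * (k:ℝ)^c * (Dc / (((s n).choose c : ℕ) : ℝ))^c
          = (n:ℝ) * (k:ℝ)^c * Dc^c / (((s n).choose c : ℕ) : ℝ)^c := by
            rw [div_pow]; ring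
        _ ≤ (n:ℝ) * (k:ℝ)^c * Dc^c / (((s n:ℝ)/2)^c / (c.factorial:ℝ))^c := by
            apply div_le_div_of_nonneg_left (by positivity) (by positivity)
            exact pow_le_pow_left₀ (le_of_lt hden_pos) hCge c
        _ = ((k:ℝ)^c * Dc^c * (c.factorial:ℝ)^c * 2^(c^2)) * ((n:ℝ)/(s n:ℝ)^(c^2)) := by
            have h2 : (((s n:ℝ)/2)^c / (c.factorial:ℝ))^c
                = (s n:ℝ)^(c^2) / ((2:ℝ)^(c^2) * (c.factorial:ℝ)^c) := by
              rw [div_pow (s n:ℝ) 2 c, div_div, div_pow, mul_pow, ← pow_mul, ← pow_mul,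
                show c*c = c^2 from (pow_two c).symm]
            rw [h2, div_div_eq_mul_div]
            field_simp
    · have := hdiv.const_mul ((k:ℝ)^c * Dc^c * (c.factorial:ℝ)^c * 2^(c^2))
      simpa using this
  have hBto0 : Tendsto B atTop (nhds 0) := by
    rw [hB]
    simpa using hterm1.add hterm2
  have hlow : Tendsto (fun n => 1 - B n) atTop (nhds 1) := by
    simpa using (tendsto_const_nhds (x := (1:ℝ)) (f := atTop)).sub hBto0
  exact tendsto_of_tendsto_of_tendsto_of_le_of_le' hlow tendsto_const_nhds
    (hmain.mono fun n h => h.1) (hmain.mono fun n h => h.2)
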